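/- arXiv:1408.5024 — 2 statements merged into one kernel-verified Lean document; each statement's English description precedes it below -/
import Mathlib

section
/- Let Q be a quantity space over a scalar system K with a basis of n elements. Then the quotient monoid Q/~ of Q by the equidimensionality congruence is a free abelian group of rank n; i.e., Q/~ is isomorphic as a group to the free abelian group on n generators (multiplicatively, to Multiplicative (Fin n → ℤ)). -/
/-!
Sending a quantity to the exponent vector of its expansion in the basis is a monoid
homomorphism `Q →* Multiplicative (Fin n → ℤ)`: scalars pass through products, and
uniqueness of the expansion makes the exponents additive. It is surjective (products of
basis powers realise every vector), and since scalars do not change exponents, two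
quantities are equidimensional exactly when their exponent vectors agree. So `~` is the
kernel congruence of this homomorphism and the first isomorphism theorem applies.
-/

/-- A *scalable (commutative) monoid* over a scalar system `K ⊆ F`:
`K` is a subset of the field `F` closed under addition, containing `1`,
closed under multiplication and under inverses of nonzero elements
(so the nonzero elements of `K` form a group under multiplication),
together with a scalar multiplication `smul` satisfying the axioms
`1 • q = q`, `α • (β • q) = (α β) • q` and `α • (q * q') = (α • q) * q'`
for scalars in `K`. -/
structure ScalableMonoid (F : Type*) [Field F] (Q : Type*) [CommMonoid Q] where
  K : Set F
  one_mem : (1 : F) ∈ K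
  add_mem : ∀ {a b : F}, a ∈ K → b ∈ K → a + b ∈ K
  mul_mem : ∀ {a b : F}, a ∈ K → b ∈ K → a * b ∈ K
  inv_mem : ∀ {a : F}, a ∈ K → a ≠ 0 → a⁻¹ ∈ K
  smul : F → Q → Q
  smul_one : ∀ q : Q, smul 1 q = q
  smul_smul : ∀ {a b : F}, a ∈ K → b ∈ K → ∀ q : Q, smul a (smul b q) = smul (a * b) q
  smul_mul : ∀ {a : F}, a ∈ K → ∀ q q' : Q, smul a (q * q') = smul a q * q'

/-- `b : Fin n → Qˣ` (a list of invertible quantities) is a basis for the scalable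
monoid `M` if every quantity has a unique expansion `q = μ • ∏ i, b i ^ k i`
with `μ ∈ K` and integer exponents `k`. -/
def ScalableMonoid.IsBasis {F : Type*} [Field F] {Q : Type*} [CommMonoid Q]
    (M : ScalableMonoid F Q) {n : ℕ} (b : Fin n → Qˣ) : Prop :=
  ∀ q : Q, ∃! p : M.K × (Fin n → ℤ),
    q = M.smul (p.1 : F) (↑(∏ i, b i ^ p.2 i) : Q)

/-- A quantity space is a scalable monoid having a (finite) basis. -/
def ScalableMonoid.IsQuantitySpace {F : Type*} [Field F] {Q : Type*} [CommMonoid Q]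
    (M : ScalableMonoid F Q) : Prop :=
  ∃ (n : ℕ) (b : Fin n → Qˣ), M.IsBasis b

/-- The measure `μ_B(q)`: the unique scalar in the expansion of `q` relative to
the basis `B`. -/
noncomputable def ScalableMonoid.measure {F : Type*} [Field F] {Q : Type*} [CommMonoid Q]
    (M : ScalableMonoid F Q) {n : ℕ} {b : Fin n → Qˣ} (hB : M.IsBasis b) (q : Q) : F :=
  ((hB q).choose.1 : F)

/-- Quantities `q, q'` are equidimensional (`q ~ q'`) if `α • q = β • q'`
for some scalars `α, β ∈ K`. -/
def ScalableMonoid.Equidim {F : Type*} [Field F] {Q : Type*} [CommMonoid Q]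
    (M : ScalableMonoid F Q) (q q' : Q) : Prop :=
  ∃ α β : F, α ∈ M.K ∧ β ∈ M.K ∧ M.smul α q = M.smul β q'

namespace ScalableMonoid

variable {F : Type*} [Field F] {Q : Type*} [CommMonoid Q]
  (M : ScalableMonoid F Q) {n : ℕ} {b : Fin n → Qˣ}

lemma smul_mul_smul {α β : F} (hα : α ∈ M.K) (hβ : β ∈ M.K) (x y : Q) :
    M.smul α x * M.smul β y = M.smul (α * β) (x * y) := by
  rw [← M.smul_mul hα, mul_comm x, ← M.smul_mul hβ, M.smul_smul hα hβ, mul_comm y x]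

lemma measure_mem (hB : M.IsBasis b) (q : Q) : M.measure hB q ∈ M.K :=
  (hB q).choose.1.2

noncomputable def exponents (hB : M.IsBasis b) (q : Q) : Fin n → ℤ :=
  (hB q).choose.2

lemma eq_smul_prod_exponents (hB : M.IsBasis b) (q : Q) :
    q = M.smul (M.measure hB q) ↑(∏ i, b i ^ M.exponents hB q i) :=
  (hB q).choose_spec.1

lemma exponents_eq_of_eq_smul (hB : M.IsBasis b) {q : Q} {α : F} (hα : α ∈ M.K)
    {k : Fin n → ℤ} (h : q = M.smul α ↑(∏ i, b i ^ k i)) : M.exponents hB q = k :=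
  (congrArg Prod.snd ((hB q).choose_spec.2 (⟨⟨α, hα⟩, k⟩ : M.K × (Fin n → ℤ)) h)).symm

lemma exponents_smul (hB : M.IsBasis b) {α : F} (hα : α ∈ M.K) (q : Q) :
    M.exponents hB (M.smul α q) = M.exponents hB q := by
  refine M.exponents_eq_of_eq_smul hB (M.mul_mem hα (M.measure_mem hB q)) ?_
  conv_lhs => rw [M.eq_smul_prod_exponents hB q]
  rw [M.smul_smul hα (M.measure_mem hB q)]

lemma exponents_prod (hB : M.IsBasis b) (k : Fin n → ℤ) :
    M.exponents hB ↑(∏ i, b i ^ k i) = k :=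
  M.exponents_eq_of_eq_smul hB M.one_mem (M.smul_one _).symm

lemma exponents_one (hB : M.IsBasis b) : M.exponents hB 1 = 0 := by
  simpa using M.exponents_prod hB 0

lemma exponents_mul (hB : M.IsBasis b) (q q' : Q) :
    M.exponents hB (q * q') = M.exponents hB q + M.exponents hB q' := by
  have hμ := M.measure_mem hB q
  have hμ' := M.measure_mem hB q'
  refine M.exponents_eq_of_eq_smul hB (M.mul_mem hμ hμ') ?_
  have hprod : (↑(∏ i, b i ^ (M.exponents hB q + M.exponents hB q') i) : Q) =
      ↑(∏ i, b i ^ M.exponents hB q i) * ↑(∏ i, b i ^ M.exponents hB q' i) := by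
    simp only [Pi.add_apply, zpow_add, Finset.prod_mul_distrib, Units.val_mul]
  rw [hprod, ← M.smul_mul_smul hμ hμ', ← M.eq_smul_prod_exponents,
    ← M.eq_smul_prod_exponents]

noncomputable def exponentsHom (hB : M.IsBasis b) : Q →* Multiplicative (Fin n → ℤ) where
  toFun q := Multiplicative.ofAdd (M.exponents hB q)
  map_one' := by rw [M.exponents_one hB, ofAdd_zero]
  map_mul' q q' := by rw [M.exponents_mul hB, ofAdd_add]

lemma exponentsHom_surjective (hB : M.IsBasis b) :
    Function.Surjective (M.exponentsHom hB) := fun k =>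
  ⟨↑(∏ i, b i ^ k.toAdd i), congrArg Multiplicative.ofAdd (M.exponents_prod hB k.toAdd)⟩

lemma equidim_iff_exponents_eq (hB : M.IsBasis b) {q q' : Q} :
    M.Equidim q q' ↔ M.exponents hB q = M.exponents hB q' := by
  constructor
  · rintro ⟨α, β, hα, hβ, h⟩
    rw [← M.exponents_smul hB hα, h, M.exponents_smul hB hβ]
  · intro h
    have hμ := M.measure_mem hB q
    have hμ' := M.measure_mem hB q'
    refine ⟨_, _, hμ', hμ, ?_⟩
    conv_lhs => rw [M.eq_smul_prod_exponents hB q]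
    conv_rhs => rw [M.eq_smul_prod_exponents hB q']
    rw [M.smul_smul hμ' hμ, M.smul_smul hμ hμ', mul_comm, h]

lemma equidim_iff_exponentsHom_eq (hB : M.IsBasis b) {q q' : Q} :
    M.Equidim q q' ↔ M.exponentsHom hB q = M.exponentsHom hB q' :=
  (M.equidim_iff_exponents_eq hB).trans Multiplicative.ofAdd.injective.eq_iff.symm

end ScalableMonoid

/-- for a quantity space with a basis of `n` elements, the
quotient `Q/~` by the equidimensionality congruence is a free abelian group of
rank `n`: it is isomorphic (as a multiplicative monoid, hence as a group) to
`Multiplicative (Fin n → ℤ)`. -/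
theorem quotient_free_abelian {F : Type*} [Field F] {Q : Type*} [CommMonoid Q]
    (M : ScalableMonoid F Q) {n : ℕ} {b : Fin n → Qˣ} (hB : M.IsBasis b)
    (c : Con Q) (hc : ∀ a b : Q, c a b ↔ M.Equidim a b) :
    Nonempty (c.Quotient ≃* Multiplicative (Fin n → ℤ)) := by
  have hker : c = Con.ker (M.exponentsHom hB) :=
    Con.ext fun q q' => (hc q q').trans (M.equidim_iff_exponentsHom_eq hB)
  subst hker
  exact ⟨Con.quotientKerEquivOfSurjective _ (M.exponentsHom_surjective hB)⟩
end

section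
/- (Barenblatt's lemma, part 1.) Let Q be a quantity space over the scalar system ℝ>0, and let d, d₁, …, d_m, b₁, …, b_r ∈ Q be such that b₁, …, b_r are independent (λ • ∏ⱼ bⱼ^{kⱼ} = 1_Q with λ ∈ ℝ>0 and integers kⱼ implies all kⱼ = 0) and each dᵢ satisfies dᵢ ~ ∏ⱼ bⱼ^{c_{ij}} for some integers c_{ij} (so that [b₁], …, [b_r] is a basis for the dimension group generated by [d₁], …, [d_m], [b₁], …, [b_r]). Let Ψ be a quantity function assigning to each tuple (p₁, …, p_m, q₁, …, q_r) with pᵢ ~ dᵢ and qⱼ ~ bⱼ a quantity Ψ(p, q) ~ d. If Ψ has a covariant scalar representation, then [d] is dependent on [b₁], …, [b_r]: there exist integers k > 0 and k₁, …, k_r with d^k ~ ∏ⱼ bⱼ^{kⱼ}. -/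
theorem exists_pos_nat_forall_mul_eq_intCast {ι : Type*} [Fintype ι] (c : ι → ℚ) :
    ∃ k : ℕ, 0 < k ∧ ∀ j, ∃ z : ℤ, (k : ℚ) * c j = z := by
  classical
  refine ⟨∏ j, (c j).den, Finset.prod_pos fun j _ => (c j).pos, fun j => ?_⟩
  refine ⟨(∏ i ∈ Finset.univ.erase j, ((c i).den : ℤ)) * (c j).num, ?_⟩
  rw [← Finset.prod_erase_mul _ _ (Finset.mem_univ j)]
  push_cast
  rw [mul_assoc, Rat.den_mul_eq_num]

theorem exists_nsmul_eq_sum_zsmul_of_forall_addMonoidHom {σ ι : Type*} [Fintype ι]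
    (E : ι → σ → ℤ) (D : σ → ℤ)
    (h : ∀ φ : (σ → ℤ) →+ ℝ, (∀ j, φ (E j) = 0) → φ D = 0) :
    ∃ k : ℕ, 0 < k ∧ ∃ c : ι → ℤ, k • D = ∑ j, c j • E j := by
  set cast : (σ → ℤ) →+ (σ → ℚ) := (Int.castAddHom ℚ).compLeft σ
  have hD : cast D ∈ Submodule.span ℚ (Set.range (cast ∘ E)) := by
    by_contra hD
    obtain ⟨f, hfD, hf⟩ := Submodule.exists_le_ker_of_notMem hD
    refine hfD (Rat.cast_injective (α := ℝ) ?_)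
    refine (h ((Rat.castHom ℝ).toAddMonoidHom.comp (f.toAddMonoidHom.comp cast)) fun j => ?_).trans
      Rat.cast_zero.symm
    simpa using hf (Submodule.subset_span ⟨j, rfl⟩)
  obtain ⟨c, hc⟩ := (Submodule.mem_span_range_iff_exists_fun ℚ).1 hD
  choose k hk z hz using exists_pos_nat_forall_mul_eq_intCast c
  refine ⟨k, hk, z, funext fun t => Int.cast_injective (α := ℚ) ?_⟩
  have := congrArg (fun v => (k : ℚ) * v t) hc
  simp [cast, Finset.mul_sum, ← mul_assoc, hz] at this
  simpa using this.symm

namespace ScalableMonoid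

section

variable {F Q : Type*} [Field F] [CommMonoid Q] (M : ScalableMonoid F Q)

lemma smul_mul_smul_s17 {a c : F} (ha : a ∈ M.K) (hc : c ∈ M.K) (q q' : Q) :
    M.smul a q * M.smul c q' = M.smul (a * c) (q * q') := by
  rw [← M.smul_mul ha, mul_comm q, ← M.smul_mul hc, M.smul_smul ha hc, mul_comm q']

lemma smul_one_mul {a : F} (ha : a ∈ M.K) (q : Q) : M.smul a 1 * q = M.smul a q := by
  rw [← M.smul_mul ha, one_mul]

lemma equidim_refl (q : Q) : M.Equidim q q := ⟨1, 1, M.one_mem, M.one_mem, rfl⟩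

namespace IsBasis

variable {M} {n : ℕ} {e : Fin n → Qˣ} (hB : M.IsBasis e)

noncomputable def exponents (q : Q) : Fin n → ℤ := (hB q).choose.2

lemma measure_mem (q : Q) : M.measure hB q ∈ M.K := (hB q).choose.1.2

lemma eq_measure_smul (q : Q) :
    q = M.smul (M.measure hB q) ↑(∏ i, e i ^ hB.exponents q i) :=
  (hB q).choose_spec.1

lemma measure_eq_and_exponents_eq {q : Q} {μ : F} (hμ : μ ∈ M.K) {k : Fin n → ℤ}
    (h : q = M.smul μ ↑(∏ i, e i ^ k i)) :
    M.measure hB q = μ ∧ hB.exponents q = k := by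
  have := (hB q).choose_spec.2 (⟨μ, hμ⟩, k) h
  exact ⟨congrArg (fun p => (p.1 : F)) this.symm, congrArg Prod.snd this.symm⟩

lemma exponents_smul {α : F} (hα : α ∈ M.K) (q : Q) :
    hB.exponents (M.smul α q) = hB.exponents q := by
  refine (hB.measure_eq_and_exponents_eq (M.mul_mem hα (hB.measure_mem q)) ?_).2
  conv_lhs => rw [hB.eq_measure_smul q]
  rw [M.smul_smul hα (hB.measure_mem q)]

lemma equidim_iff (q q' : Q) : M.Equidim q q' ↔ hB.exponents q = hB.exponents q' := by
  constructor
  · rintro ⟨α, β, hα, hβ, h⟩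
    rw [← hB.exponents_smul hα, h, hB.exponents_smul hβ]
  · intro h
    refine ⟨M.measure hB q', M.measure hB q, hB.measure_mem q', hB.measure_mem q, ?_⟩
    conv_lhs => rw [hB.eq_measure_smul q]
    conv_rhs => rw [hB.eq_measure_smul q']
    rw [M.smul_smul (hB.measure_mem q') (hB.measure_mem q),
      M.smul_smul (hB.measure_mem q) (hB.measure_mem q'), mul_comm, h]

lemma exponents_one : hB.exponents (1 : Q) = 0 :=
  (hB.measure_eq_and_exponents_eq M.one_mem (by simp [M.smul_one])).2

lemma exponents_mul (q q' : Q) :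
    hB.exponents (q * q') = hB.exponents q + hB.exponents q' := by
  refine (hB.measure_eq_and_exponents_eq
    (M.mul_mem (hB.measure_mem q) (hB.measure_mem q')) ?_).2
  conv_lhs => rw [hB.eq_measure_smul q, hB.eq_measure_smul q']
  simp only [M.smul_mul_smul_s17 (hB.measure_mem q) (hB.measure_mem q'), Pi.add_apply, zpow_add,
    Finset.prod_mul_distrib, Units.val_mul]

noncomputable def exponentsHom : Q →* Multiplicative (Fin n → ℤ) where
  toFun q := .ofAdd (hB.exponents q)
  map_one' := congrArg _ hB.exponents_one
  map_mul' q q' := congrArg _ (hB.exponents_mul q q')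

lemma exponents_pow (q : Q) (k : ℕ) : hB.exponents (q ^ k) = k • hB.exponents q :=
  congrArg Multiplicative.toAdd (map_pow hB.exponentsHom q k)

lemma exponents_prod_zpow {ι : Type*} [Fintype ι] (b : ι → Qˣ) (k : ι → ℤ) :
    hB.exponents ↑(∏ j, b j ^ k j) = ∑ j, k j • hB.exponents ↑(b j) := by
  have := map_prod (hB.exponentsHom.comp (Units.coeHom Q)) (fun j => b j ^ k j) Finset.univ
  simp only [map_zpow] at this
  exact congrArg Multiplicative.toAdd this

end IsBasis

end

section

variable {Q : Type*} [CommMonoid Q] (M : ScalableMonoid ℝ Q) (hK : M.K = {x : ℝ | 0 < x})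

include hK in
lemma exp_mem (x : ℝ) : Real.exp x ∈ M.K := hK ▸ Real.exp_pos x

noncomputable def expSmulOneHom : Multiplicative ℝ →* Qˣ where
  toFun x :=
    { val := M.smul (Real.exp x.toAdd) 1
      inv := M.smul (Real.exp (-x.toAdd)) 1
      val_inv := by
        rw [M.smul_mul_smul_s17 (M.exp_mem hK _) (M.exp_mem hK _), ← Real.exp_add, add_neg_cancel,
          Real.exp_zero, one_mul, M.smul_one]
      inv_val := by
        rw [M.smul_mul_smul_s17 (M.exp_mem hK _) (M.exp_mem hK _), ← Real.exp_add, neg_add_cancel,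
          Real.exp_zero, one_mul, M.smul_one] }
  map_one' := Units.ext (by simp [M.smul_one])
  map_mul' x y := Units.ext (by
    simp [M.smul_mul_smul_s17 (M.exp_mem hK _) (M.exp_mem hK _), Real.exp_add])

lemma expSmulOneHom_ofAdd_mul (x : ℝ) (q : Q) :
    ↑(M.expSmulOneHom hK (.ofAdd x)) * q = M.smul (Real.exp x) q :=
  M.smul_one_mul (M.exp_mem hK x) q

variable {M} {n : ℕ}

noncomputable def rescale (φ : (Fin n → ℤ) →+ ℝ) (e : Fin n → Qˣ) (t : Fin n) : Qˣ :=
  M.expSmulOneHom hK (.ofAdd (φ (Pi.single t 1))) * e t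

lemma prod_rescale_zpow (φ : (Fin n → ℤ) →+ ℝ) (e : Fin n → Qˣ) (k : Fin n → ℤ) :
    (↑(∏ t, rescale hK φ e t ^ k t) : Q) = M.smul (Real.exp (φ k)) ↑(∏ t, e t ^ k t) := by
  have hk : Multiplicative.ofAdd (φ k) = ∏ t, .ofAdd (φ (Pi.single t 1)) ^ k t := by
    conv_lhs => rw [pi_eq_sum_univ' k]
    simp only [map_sum, map_zsmul, ofAdd_sum, ofAdd_zsmul]
  rw [← expSmulOneHom_ofAdd_mul M hK, ← Units.val_mul, hk]
  simp only [rescale, mul_zpow, Finset.prod_mul_distrib, map_prod, map_zpow]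

namespace IsBasis

variable {e : Fin n → Qˣ} (hB : M.IsBasis e) (φ : (Fin n → ℤ) →+ ℝ)

include hK in
lemma measure_pos (q : Q) : 0 < M.measure hB q := by
  have := hB.measure_mem q
  rwa [hK] at this

lemma eq_smul_prod_rescale_zpow (q : Q) :
    q = M.smul (M.measure hB q * Real.exp (-φ (hB.exponents q)))
      ↑(∏ t, rescale hK φ e t ^ hB.exponents q t) := by
  rw [prod_rescale_zpow, M.smul_smul (M.mul_mem (hB.measure_mem q) (M.exp_mem hK _))
    (M.exp_mem hK _), mul_assoc, ← Real.exp_add, neg_add_cancel, Real.exp_zero, mul_one]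
  exact hB.eq_measure_smul q

include hB in
protected lemma rescale : M.IsBasis (rescale hK φ e) := by
  intro q
  refine ⟨(⟨_, M.mul_mem (hB.measure_mem q) (M.exp_mem hK _)⟩, hB.exponents q),
    hB.eq_smul_prod_rescale_zpow hK φ q, ?_⟩
  rintro ⟨⟨μ, hμ⟩, k⟩ h
  rw [prod_rescale_zpow, M.smul_smul hμ (M.exp_mem hK _)] at h
  obtain ⟨hμq, rfl⟩ := hB.measure_eq_and_exponents_eq (M.mul_mem hμ (M.exp_mem hK _)) h
  refine Prod.ext (Subtype.ext ?_) rfl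
  dsimp only
  rw [hμq, mul_assoc, ← Real.exp_add, add_neg_cancel, Real.exp_zero, mul_one]

lemma measure_rescale (q : Q) :
    M.measure (hB.rescale hK φ) q = M.measure hB q * Real.exp (-φ (hB.exponents q)) :=
  ((hB.rescale hK φ).measure_eq_and_exponents_eq
    (M.mul_mem (hB.measure_mem q) (M.exp_mem hK _)) (hB.eq_smul_prod_rescale_zpow hK φ q)).1

lemma measure_rescale_eq_iff (q : Q) :
    M.measure (hB.rescale hK φ) q = M.measure hB q ↔ φ (hB.exponents q) = 0 := by
  rw [measure_rescale, mul_eq_left₀ (hB.measure_pos hK q).ne', Real.exp_eq_one_iff, neg_eq_zero]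

include hK in
lemma map_exponents_eq_zero_of_covariant {ι κ : Type*} (ψ : (ι → ℝ) → (κ → ℝ) → ℝ)
    (p : ι → Q) (q : κ → Q) (x : Q)
    (hψ : ∀ {nB : ℕ} {bB : Fin nB → Qˣ} (hB' : M.IsBasis bB),
      ψ (fun i => M.measure hB' (p i)) (fun j => M.measure hB' (q j)) = M.measure hB' x)
    (hp : ∀ i, φ (hB.exponents (p i)) = 0) (hq : ∀ j, φ (hB.exponents (q j)) = 0) :
    φ (hB.exponents x) = 0 := by
  rw [← hB.measure_rescale_eq_iff hK, ← hψ, ← hψ]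
  simp only [(hB.measure_rescale_eq_iff hK φ _).2, hp, hq]

end IsBasis

end

end ScalableMonoid

theorem barenblatt_lemma_part1_general {Q : Type*} [CommMonoid Q]
    (M : ScalableMonoid ℝ Q) (hK : M.K = {x : ℝ | 0 < x})
    (hQS : M.IsQuantitySpace)
    {m r : ℕ} (d : Q) (dd : Fin m → Q) (b : Fin r → Qˣ)
    (hdd : ∀ i, ∃ cv : Fin r → ℤ, M.Equidim (dd i) (↑(∏ j, b j ^ cv j) : Q))
    (Ψ : (Fin m → Q) → (Fin r → Q) → Q)
    (hΨ : ∀ (p : Fin m → Q) (q : Fin r → Q),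
      (∀ i, M.Equidim (p i) (dd i)) → (∀ j, M.Equidim (q j) ↑(b j)) →
      M.Equidim (Ψ p q) d)
    (hcov : ∃ ψ : (Fin m → ℝ) → (Fin r → ℝ) → ℝ,
      ∀ {nB : ℕ} {bB : Fin nB → Qˣ} (hB : M.IsBasis bB)
        (p : Fin m → Q) (q : Fin r → Q),
        (∀ i, M.Equidim (p i) (dd i)) → (∀ j, M.Equidim (q j) ↑(b j)) →
        ψ (fun i => M.measure hB (p i)) (fun j => M.measure hB (q j)) =
          M.measure hB (Ψ p q)) :
    ∃ k : ℕ, 0 < k ∧ ∃ kv : Fin r → ℤ,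
      M.Equidim (d ^ k) (↑(∏ j, b j ^ kv j) : Q) := by
  obtain ⟨n, e, hB⟩ := hQS
  obtain ⟨ψ, hψ⟩ := hcov
  have hΨd : hB.exponents (Ψ dd (fun j => b j)) = hB.exponents d :=
    (hB.equidim_iff _ _).1 (hΨ _ _ (fun i => M.equidim_refl _) (fun j => M.equidim_refl _))
  have hinvariant : ∀ φ : (Fin n → ℤ) →+ ℝ,
      (∀ j, φ (hB.exponents (b j)) = 0) → φ (hB.exponents d) = 0 := by
    intro φ hφ
    refine hΨd ▸ hB.map_exponents_eq_zero_of_covariant hK φ ψ dd (fun j => b j) _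
      (fun hB' => hψ hB' _ _ (fun i => M.equidim_refl _) (fun j => M.equidim_refl _))
      (fun i => ?_) hφ
    obtain ⟨cv, hcv⟩ := hdd i
    rw [(hB.equidim_iff _ _).1 hcv, hB.exponents_prod_zpow, map_sum]
    simp only [map_zsmul, hφ, smul_zero, Finset.sum_const_zero]
  obtain ⟨k, hk, kv, hkv⟩ := exists_nsmul_eq_sum_zsmul_of_forall_addMonoidHom _ _ hinvariant
  refine ⟨k, hk, kv, ?_⟩
  rw [hB.equidim_iff, hB.exponents_pow, hB.exponents_prod_zpow, hkv]

/-- Barenblatt's lemma, part 1: in a quantity space over the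
positive reals, let `b₁, …, b_r` be independent and let each `dᵢ` satisfy
`dᵢ ~ ∏ⱼ bⱼ^{c_ij}`. If a quantity function `Ψ` taking admissible tuples
(`pᵢ ~ dᵢ`, `qⱼ ~ bⱼ`) to quantities `~ d` has a covariant scalar
representation, then `[d]` is dependent on `[b₁], …, [b_r]`: `d^k ~ ∏ bⱼ^{kⱼ}`
for some `k > 0` and integers `kⱼ`. -/
theorem barenblatt_lemma_part1 {Q : Type*} [CommMonoid Q]
    (M : ScalableMonoid ℝ Q) (hK : M.K = {x : ℝ | 0 < x})
    (hQS : M.IsQuantitySpace)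
    {m r : ℕ} (d : Q) (dd : Fin m → Q) (b : Fin r → Qˣ)
    (hb : ∀ lam : ℝ, lam ∈ M.K → ∀ kv : Fin r → ℤ,
      M.smul lam (↑(∏ j, b j ^ kv j) : Q) = 1 → kv = 0)
    (hdd : ∀ i, ∃ cv : Fin r → ℤ, M.Equidim (dd i) (↑(∏ j, b j ^ cv j) : Q))
    (Ψ : (Fin m → Q) → (Fin r → Q) → Q)
    (hΨ : ∀ (p : Fin m → Q) (q : Fin r → Q),
      (∀ i, M.Equidim (p i) (dd i)) → (∀ j, M.Equidim (q j) ↑(b j)) →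
      M.Equidim (Ψ p q) d)
    (hcov : ∃ ψ : (Fin m → ℝ) → (Fin r → ℝ) → ℝ,
      ∀ {nB : ℕ} {bB : Fin nB → Qˣ} (hB : M.IsBasis bB)
        (p : Fin m → Q) (q : Fin r → Q),
        (∀ i, M.Equidim (p i) (dd i)) → (∀ j, M.Equidim (q j) ↑(b j)) →
        ψ (fun i => M.measure hB (p i)) (fun j => M.measure hB (q j)) =
          M.measure hB (Ψ p q)) :
    ∃ k : ℕ, 0 < k ∧ ∃ kv : Fin r → ℤ,
      M.Equidim (d ^ k) (↑(∏ j, b j ^ kv j) : Q) :=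
  barenblatt_lemma_part1_general M hK hQS d dd b hdd Ψ hΨ hcov
end
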